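/- Let A be an n×n nonnegative matrix, S(A) the matrix with entries Sign(a_{ij}) ∈ {0,1}, and μ*(A) = max_σ μ_σ(A) over all cycles σ. Then ρ(A) ≤ ρ(S(A)) · μ*(A). -/

import Mathlib

/-!
For `c > μ*(A)` every simple cycle of `A / c` has product at most one, so cutting cycles out of
a walk never decreases its product, and every walk product of `A / c` is bounded. The potential
`p j`, the supremum of the products of `A / c` along walks ending at `j`, is therefore finite,
at least one, and satisfies `p i * a_ij / c ≤ p j`. Conjugating `A` by `diag p` keeps the
spectrum and makes the matrix entrywise dominated by `c • S(A)`; by Gelfand's formula in the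
`ℓ∞` operator norm the spectral radius is monotone under such domination, so
`ρ(A) ≤ c ρ(S(A))`. Let `c ↓ μ*(A)`.
-/

/-- Spectral radius of a real matrix: the supremum of the absolute values of the
(complex) roots of its characteristic polynomial. -/
noncomputable def specRad {n : Type*} [Fintype n] [DecidableEq n]
    (A : Matrix n n ℝ) : ℝ :=
  sSup {r : ℝ | ∃ μ : ℂ, ((A.map (algebraMap ℝ ℂ)).charpoly).IsRoot μ ∧ r = ‖μ‖}

open Finset Matrix

section Walks

variable {ι : Type*} (w : ι → ι → ℝ)

def walkProd (G : ℕ → ι) (k : ℕ) : ℝ :=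
  ∏ t ∈ range k, w (G t) (G (t + 1))

def SimpleCycleProdLeOne : Prop :=
  ∀ (m : ℕ) (f : Fin (m + 1) → ι), Function.Injective f →
    ∏ j : Fin (m + 1), w (f j) (f (j + 1)) ≤ 1

variable {w}

lemma walkProd_nonneg (hw : ∀ i j, 0 ≤ w i j) (G : ℕ → ι) (k : ℕ) : 0 ≤ walkProd w G k :=
  prod_nonneg fun _ _ => hw _ _

lemma walkProd_congr {G H : ℕ → ι} {k : ℕ} (h : ∀ t ≤ k, G t = H t) :
    walkProd w G k = walkProd w H k :=
  prod_congr rfl fun t ht => by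
    rw [mem_range] at ht
    rw [h t ht.le, h (t + 1) ht]

lemma walkProd_zero (G : ℕ → ι) : walkProd w G 0 = 1 := prod_range_zero _

lemma walkProd_add (G : ℕ → ι) (a l : ℕ) :
    walkProd w G (a + l) = walkProd w G a * walkProd w (fun t => G (a + t)) l := by
  simp only [walkProd, prod_range_add, add_assoc]

lemma walkProd_update_succ [DecidableEq ι] (G : ℕ → ι) (k : ℕ) (j : ι) :
    walkProd w (Function.update G (k + 1) j) (k + 1) = walkProd w G k * w (G k) j := by
  rw [walkProd, prod_range_succ, ← walkProd,
    walkProd_congr fun t ht => Function.update_of_ne (by omega) j G,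
    Function.update_self, Function.update_of_ne (by omega)]

lemma walkProd_le_pow {K : ℝ} (hw : ∀ i j, 0 ≤ w i j) (hK : ∀ i j, w i j ≤ K)
    (G : ℕ → ι) (k : ℕ) : walkProd w G k ≤ K ^ k := by
  calc walkProd w G k ≤ ∏ _t ∈ range k, K :=
        prod_le_prod (fun t _ => hw (G t) (G (t + 1))) fun t _ => hK (G t) (G (t + 1))
    _ = K ^ k := by rw [prod_const, card_range]

lemma exists_repeat_injOn [Fintype ι] (G : ℕ → ι) {L : ℕ} (hL : Fintype.card ι ≤ L) :
    ∃ a b, a < b ∧ b ≤ L ∧ G a = G b ∧ Set.InjOn G (Set.Ico a b) := by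
  classical
  have hrep : ∃ b, ∃ a < b, b ≤ L ∧ G a = G b := by
    obtain ⟨x, y, hxy, hG⟩ := Fintype.exists_ne_map_eq_of_card_lt (fun t : Fin (L + 1) => G t)
      (by simpa using Nat.lt_succ_of_le hL)
    rcases Fin.lt_or_lt_of_ne hxy with h | h
    · exact ⟨y, x, h, Nat.lt_succ_iff.mp y.isLt, hG⟩
    · exact ⟨x, y, h, Nat.lt_succ_iff.mp x.isLt, hG.symm⟩
  -- the first repetition closes a cycle without earlier repetitions
  obtain ⟨a, hab, hbL, hG⟩ := Nat.find_spec hrep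
  refine ⟨a, _, hab, hbL, hG, fun x hx y hy hxy => ?_⟩
  by_contra hne
  rcases lt_or_gt_of_ne hne with h | h
  · exact Nat.find_min hrep hy.2 ⟨x, h, hy.2.le.trans hbL, hxy⟩
  · exact Nat.find_min hrep hx.2 ⟨y, h, hx.2.le.trans hbL, hxy.symm⟩

lemma walkProd_le_one_of_closed (hcyc : SimpleCycleProdLeOne w) {C : ℕ → ι} {m : ℕ}
    (hclosed : C (m + 1) = C 0) (hinj : Set.InjOn C (Set.Iic m)) :
    walkProd w C (m + 1) ≤ 1 := by
  have hf : Function.Injective fun j : Fin (m + 1) => C j := fun x y hxy =>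
    Fin.ext (hinj (Nat.lt_succ_iff.mp x.isLt) (Nat.lt_succ_iff.mp y.isLt) hxy)
  refine le_of_eq_of_le ?_ (hcyc m _ hf)
  rw [walkProd, ← Fin.prod_univ_eq_prod_range]
  refine prod_congr rfl fun j _ => ?_
  rw [Fin.val_add_one]
  split_ifs with h
  · rw [h, Fin.val_last, hclosed]
  · rfl

lemma exists_shorter_walkProd_ge [Fintype ι] (hw : ∀ i j, 0 ≤ w i j)
    (hcyc : SimpleCycleProdLeOne w) (G : ℕ → ι) {L : ℕ} (hL : Fintype.card ι ≤ L) :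
    ∃ L' < L, ∃ H : ℕ → ι, walkProd w G L ≤ walkProd w H L' := by
  obtain ⟨a, b, hab, hbL, hG, hinj⟩ := exists_repeat_injOn G hL
  obtain ⟨m, rfl⟩ : ∃ m, b = a + (m + 1) := ⟨b - a - 1, by omega⟩
  obtain ⟨l, rfl⟩ : ∃ l, L = a + (m + 1) + l := ⟨L - (a + (m + 1)), by omega⟩
  have hcycle : walkProd w (fun t => G (a + t)) (m + 1) ≤ 1 := by
    refine walkProd_le_one_of_closed hcyc (by simpa using hG.symm) fun x hx y hy hxy => ?_
    simp only [Set.mem_Iic] at hx hy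
    have := hinj (⟨by omega, by omega⟩ : a + x ∈ Set.Ico a (a + (m + 1)))
      (⟨by omega, by omega⟩ : a + y ∈ Set.Ico a (a + (m + 1))) hxy
    omega
  -- `H` is `G` with the cycle `G a → ⋯ → G (a + m + 1) = G a` cut out
  set H : ℕ → ι := fun t => if t ≤ a then G t else G (t + (m + 1))
  have hH_head : walkProd w H a = walkProd w G a := walkProd_congr fun t ht => if_pos ht
  have hH_tail : (fun t => H (a + t)) = fun t => G (a + (m + 1) + t) := by
    funext t
    rcases Nat.eq_zero_or_pos t with rfl | ht
    · simp [H, hG]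
    · simp only [H, if_neg (show ¬ a + t ≤ a by omega)]
      congr 1
      omega
  refine ⟨a + l, by omega, H, ?_⟩
  have hhead := walkProd_nonneg hw G a
  calc walkProd w G (a + (m + 1) + l)
      = walkProd w G a * walkProd w (fun t => G (a + t)) (m + 1) *
          walkProd w (fun t => G (a + (m + 1) + t)) l := by
        rw [walkProd_add, walkProd_add]
    _ ≤ walkProd w G a * 1 * walkProd w (fun t => G (a + (m + 1) + t)) l := by
        gcongr
        exact walkProd_nonneg hw _ _
    _ = walkProd w H (a + l) := by rw [walkProd_add, hH_head, hH_tail, mul_one]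

lemma walkProd_le_pow_card [Fintype ι] (hw : ∀ i j, 0 ≤ w i j)
    (hcyc : SimpleCycleProdLeOne w) {K : ℝ} (hK1 : 1 ≤ K) (hK : ∀ i j, w i j ≤ K)
    (G : ℕ → ι) (L : ℕ) : walkProd w G L ≤ K ^ Fintype.card ι := by
  induction L using Nat.strong_induction_on generalizing G with
  | _ L ih =>
  rcases lt_or_ge L (Fintype.card ι) with hL | hL
  · exact (walkProd_le_pow hw hK G L).trans (pow_le_pow_right₀ hK1 hL.le)
  · obtain ⟨L', hL', H, hle⟩ := exists_shorter_walkProd_ge hw hcyc G hL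
    exact hle.trans (ih L' hL' H)

variable (w) in
noncomputable def walkPotential (j : ι) : ℝ :=
  sSup {x | ∃ (G : ℕ → ι) (k : ℕ), G k = j ∧ walkProd w G k = x}

lemma bddAbove_walkProd_ending_at [Finite ι] (hw : ∀ i j, 0 ≤ w i j)
    (hcyc : SimpleCycleProdLeOne w) (j : ι) :
    BddAbove {x | ∃ (G : ℕ → ι) (k : ℕ), G k = j ∧ walkProd w G k = x} := by
  have := Fintype.ofFinite ι
  obtain ⟨K, hK⟩ := (Set.finite_range (Function.uncurry w)).bddAbove
  refine ⟨max K 1 ^ Fintype.card ι, ?_⟩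
  rintro _ ⟨G, k, -, rfl⟩
  exact walkProd_le_pow_card hw hcyc (le_max_right _ _)
    (fun i j => (hK ⟨(i, j), rfl⟩).trans (le_max_left _ _)) G k

lemma one_le_walkPotential [Finite ι] (hw : ∀ i j, 0 ≤ w i j)
    (hcyc : SimpleCycleProdLeOne w) (j : ι) : 1 ≤ walkPotential w j :=
  le_csSup (bddAbove_walkProd_ending_at hw hcyc j) ⟨fun _ => j, 0, rfl, walkProd_zero _⟩

lemma walkPotential_mul_le [Finite ι] (hw : ∀ i j, 0 ≤ w i j)
    (hcyc : SimpleCycleProdLeOne w) (i j : ι) :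
    walkPotential w i * w i j ≤ walkPotential w j := by
  classical
  rcases (hw i j).eq_or_lt with h | h
  · rw [← h, mul_zero]
    exact zero_le_one.trans (one_le_walkPotential hw hcyc j)
  rw [← le_div_iff₀ h]
  refine csSup_le ⟨1, fun _ => i, 0, rfl, walkProd_zero _⟩ ?_
  rintro _ ⟨G, k, rfl, rfl⟩
  rw [le_div_iff₀ h, ← walkProd_update_succ]
  exact le_csSup (bddAbove_walkProd_ending_at hw hcyc j) ⟨_, k + 1, Function.update_self .., rfl⟩

theorem exists_pos_mul_le_of_simpleCycleProdLeOne [Finite ι] (hw : ∀ i j, 0 ≤ w i j)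
    (hcyc : SimpleCycleProdLeOne w) : ∃ p : ι → ℝ, (∀ i, 0 < p i) ∧ ∀ i j, p i * w i j ≤ p j :=
  ⟨walkPotential w, fun i => zero_lt_one.trans_le (one_le_walkPotential hw hcyc i),
    walkPotential_mul_le hw hcyc⟩

lemma simpleCycleProdLeOne_div_of_cycleMean_le (hw : ∀ i j, 0 ≤ w i j)
    {μ c : ℝ} (hμ : 0 ≤ μ) (hμc : μ < c)
    (hmean : ∀ (m : ℕ) (f : Fin (m + 1) → ι), Function.Injective f →
      (∏ j : Fin (m + 1), w (f j) (f (j + 1))) ^ ((1 : ℝ) / (m + 1)) ≤ μ) :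
    SimpleCycleProdLeOne fun i j => w i j / c := by
  intro m f hf
  have hc : 0 < c := hμ.trans_lt hμc
  have hprod : 0 ≤ ∏ j : Fin (m + 1), w (f j) (f (j + 1)) := prod_nonneg fun _ _ => hw _ _
  have hle := hmean m f hf
  rw [one_div, Real.rpow_inv_le_iff_of_pos hprod hμ (by positivity)] at hle
  rw [prod_div_distrib, prod_const, card_univ, Fintype.card_fin, div_le_one (by positivity)]
  calc ∏ j : Fin (m + 1), w (f j) (f (j + 1)) ≤ μ ^ ((m : ℝ) + 1) := hle
    _ = μ ^ (m + 1) := by exact_mod_cast Real.rpow_natCast μ (m + 1)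
    _ ≤ c ^ (m + 1) := by gcongr

end Walks

section SpectralRadius

lemma spectralRadius_mono_of_nnnorm_pow_le {A : Type*} [NormedRing A] [NormedAlgebra ℂ A]
    [CompleteSpace A] {a b : A} (h : ∀ k : ℕ, ‖a ^ k‖₊ ≤ ‖b ^ k‖₊) :
    spectralRadius ℂ a ≤ spectralRadius ℂ b :=
  le_of_tendsto_of_tendsto' (spectrum.pow_nnnorm_pow_one_div_tendsto_nhds_spectralRadius a)
    (spectrum.pow_nnnorm_pow_one_div_tendsto_nhds_spectralRadius b) fun k =>
      ENNReal.rpow_le_rpow (by exact_mod_cast h k) (by positivity)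

lemma spectralRadius_smul_of_ne_zero {𝕜 A : Type*} [NormedField 𝕜] [Ring A] [Algebra 𝕜 A]
    {k : 𝕜} (hk : k ≠ 0) (a : A) :
    spectralRadius 𝕜 (k • a) = ‖k‖₊ * spectralRadius 𝕜 a := by
  rw [spectralRadius, spectralRadius, show k • a = Units.mk0 k hk • a from rfl,
    spectrum.unit_smul_eq_smul, ← Set.image_smul, iSup_image]
  simp_rw [ENNReal.mul_iSup, Units.smul_def, Units.val_mk0, nnnorm_smul, ENNReal.coe_mul]

end SpectralRadius

section MatrixSpectralRadius

variable {ι : Type*} [Fintype ι] [DecidableEq ι]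

lemma abs_pow_apply_le {R : Type*} [CommRing R] [LinearOrder R] [IsStrictOrderedRing R]
    {B C : Matrix ι ι R} (h : ∀ i j, |B i j| ≤ C i j) (k : ℕ) (i j : ι) :
    |(B ^ k) i j| ≤ (C ^ k) i j := by
  induction k generalizing j with
  | zero => by_cases hij : i = j <;> simp [one_apply, hij]
  | succ k ih =>
    rw [pow_succ, pow_succ, mul_apply, mul_apply]
    refine (abs_sum_le_sum_abs _ _).trans (sum_le_sum fun l _ => ?_)
    rw [abs_mul]
    exact mul_le_mul (ih l) (h l j) (abs_nonneg _) ((abs_nonneg _).trans (ih l))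

attribute [local instance] Matrix.linftyOpNormedRing Matrix.linftyOpNormedAlgebra in
lemma spectralRadius_map_le_of_abs_le {B C : Matrix ι ι ℝ} (h : ∀ i j, |B i j| ≤ C i j) :
    spectralRadius ℂ (B.map (algebraMap ℝ ℂ)) ≤ spectralRadius ℂ (C.map (algebraMap ℝ ℂ)) := by
  refine spectralRadius_mono_of_nnnorm_pow_le fun k => ?_
  rw [← Matrix.map_pow, ← Matrix.map_pow, linfty_opNNNorm_def, linfty_opNNNorm_def]
  refine Finset.sup_mono_fun fun i _ => sum_le_sum fun j _ => ?_
  have hk := abs_pow_apply_le h k i j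
  rw [← NNReal.coe_le_coe]
  simpa [abs_of_nonneg ((abs_nonneg _).trans hk)] using hk

lemma ofReal_specRad (M : Matrix ι ι ℝ) :
    ENNReal.ofReal (specRad M) = spectralRadius ℂ (M.map (algebraMap ℝ ℂ)) := by
  set σ := spectrum ℂ (M.map (algebraMap ℝ ℂ))
  have hσ : {r : ℝ | ∃ μ : ℂ, ((M.map (algebraMap ℝ ℂ)).charpoly).IsRoot μ ∧ r = ‖μ‖} =
      NNReal.toReal '' (nnnorm '' σ) := by
    ext r
    simp [σ, Matrix.mem_spectrum_iff_isRoot_charpoly, eq_comm]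
  rw [specRad, hσ, ← NNReal.coe_sSup, ENNReal.ofReal_coe_nnreal,
    ENNReal.coe_sSup ((Matrix.finite_spectrum _).image _).bddAbove, spectralRadius, iSup_image]

lemma specRad_nonneg (M : Matrix ι ι ℝ) : 0 ≤ specRad M :=
  Real.sSup_nonneg <| by
    rintro _ ⟨μ, -, rfl⟩
    exact norm_nonneg μ

lemma specRad_le_of_abs_le {B C : Matrix ι ι ℝ} (h : ∀ i j, |B i j| ≤ C i j) :
    specRad B ≤ specRad C := by
  rw [← ENNReal.ofReal_le_ofReal_iff (specRad_nonneg C), ofReal_specRad, ofReal_specRad]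
  exact spectralRadius_map_le_of_abs_le h

lemma specRad_smul {c : ℝ} (hc : 0 < c) (M : Matrix ι ι ℝ) : specRad (c • M) = c * specRad M := by
  rw [← ENNReal.ofReal_eq_ofReal_iff (specRad_nonneg _) (mul_nonneg hc.le (specRad_nonneg _)),
    ENNReal.ofReal_mul hc.le, ofReal_specRad, ofReal_specRad,
    show (c • M).map (algebraMap ℝ ℂ) = (c : ℂ) • M.map (algebraMap ℝ ℂ) by ext; simp,
    spectralRadius_smul_of_ne_zero (by exact_mod_cast hc.ne'), Complex.nnnorm_real,
    ← enorm_eq_nnnorm, Real.enorm_eq_ofReal hc.le]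

lemma specRad_conj {D D' : Matrix ι ι ℝ} (h : D' * D = 1) (M : Matrix ι ι ℝ) :
    specRad (D * M * D') = specRad M := by
  simp only [specRad, charpoly_map]
  rw [mul_assoc, charpoly_mul_comm, mul_assoc, h, mul_one]

lemma specRad_of_isEmpty [IsEmpty ι] (M : Matrix ι ι ℝ) : specRad M = 0 := by
  simp [specRad, charpoly_isEmpty]

end MatrixSpectralRadius

lemma specRad_le_mul_specRad_sign {ι : Type*} [Fintype ι] [DecidableEq ι] {A : Matrix ι ι ℝ}
    (hA : ∀ i j, 0 ≤ A i j) {c : ℝ} (hc : 0 < c)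
    (hcyc : SimpleCycleProdLeOne fun i j => A i j / c) :
    specRad A ≤ c * specRad (Matrix.of fun i j => if A i j = 0 then (0 : ℝ) else 1) := by
  obtain ⟨p, hp, hpA⟩ :=
    exists_pos_mul_le_of_simpleCycleProdLeOne (fun i j => div_nonneg (hA i j) hc.le) hcyc
  have hinv : diagonal p⁻¹ * diagonal p = 1 := by
    rw [diagonal_mul_diagonal, ← diagonal_one]
    exact congrArg diagonal (funext fun i => inv_mul_cancel₀ (hp i).ne')
  -- conjugating by `diagonal p` scales every nonzero entry of `A` into `(0, c]`
  rw [← specRad_conj hinv A, ← specRad_smul hc]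
  refine specRad_le_of_abs_le fun i j => ?_
  simp only [mul_diagonal, diagonal_mul, Matrix.smul_apply, Matrix.of_apply, Pi.inv_apply,
    smul_eq_mul]
  split_ifs with h
  · simp [h]
  · have hpij := hpA i j
    rw [mul_div_assoc', div_le_iff₀ hc] at hpij
    rw [abs_of_nonneg (mul_nonneg (mul_nonneg (hp i).le (hA i j)) (inv_nonneg.2 (hp j).le)),
      mul_one, mul_inv_le_iff₀ (hp j)]
    linarith

theorem specRad_le_sign_mul_max_cycle_mean_general (n : ℕ) (A : Matrix (Fin n) (Fin n) ℝ)
    (hA : ∀ i j, 0 ≤ A i j) (μs : ℝ)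
    (hub : ∀ (m : ℕ) (f : Fin (m + 1) → Fin n), Function.Injective f →
      (∏ j : Fin (m + 1), A (f j) (f (j + 1))) ^ ((1 : ℝ) / (m + 1)) ≤ μs) :
    specRad A ≤
      specRad (Matrix.of fun i j : Fin n => if A i j = 0 then (0 : ℝ) else 1) * μs := by
  rcases isEmpty_or_nonempty (Fin n) with hn | ⟨⟨i⟩⟩
  · simp [specRad_of_isEmpty]
  have hμs : 0 ≤ μs := by
    have hloop := hub 0 (fun _ => i) fun a b _ => Subsingleton.elim (α := Fin 1) a b
    norm_num at hloop
    exact (hA i i).trans hloop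
  have hbound : ∀ c > μs, specRad A ≤
      specRad (Matrix.of fun i j : Fin n => if A i j = 0 then (0 : ℝ) else 1) * c :=
    fun c hc => (specRad_le_mul_specRad_sign hA (hμs.trans_lt hc)
      (simpleCycleProdLeOne_div_of_cycleMean_le hA hμs hc hub)).trans_eq (mul_comm _ _)
  exact ge_of_tendsto (((continuous_const_mul _).tendsto μs).mono_left nhdsWithin_le_nhds)
    (eventually_nhdsWithin_of_forall (s := Set.Ioi μs) hbound)

/-- Friedland's upper bound `ρ(A) ≤ ρ(S(A)) μ*(A)` for a nonnegative matrix `A`.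
Here `S(A)` is the 0-1 sign pattern of `A`, and `μ*(A)` is the maximum, over all cycles
`f 0 → ⋯ → f m → f 0` through distinct indices, of the geometric mean
`(Π_j A (f j) (f (j+1)))^{1/(m+1)}` of the entries of `A` along the cycle; `μs` below
is characterized as this maximum (it bounds every cycle mean and is attained). -/
theorem specRad_le_sign_mul_max_cycle_mean (n : ℕ) (A : Matrix (Fin n) (Fin n) ℝ)
    (hA : ∀ i j, 0 ≤ A i j) (μs : ℝ)
    (hub : ∀ (m : ℕ) (f : Fin (m + 1) → Fin n), Function.Injective f →
      (∏ j : Fin (m + 1), A (f j) (f (j + 1))) ^ ((1 : ℝ) / (m + 1)) ≤ μs)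
    (hmem : ∃ (m : ℕ) (f : Fin (m + 1) → Fin n), Function.Injective f ∧
      (∏ j : Fin (m + 1), A (f j) (f (j + 1))) ^ ((1 : ℝ) / (m + 1)) = μs) :
    specRad A ≤
      specRad (Matrix.of fun i j : Fin n => if A i j = 0 then (0 : ℝ) else 1) * μs :=
  specRad_le_sign_mul_max_cycle_mean_general n A hA μs hub
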